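/- Let (V,C,u) be an order unit space with a strictly convex cone, g : C° → C° a bijective antihomogeneous order-antimorphism, and x ∈ C°. Let G_x : V → V be a linear bijection with G_x(z) = −lim_{t→0} (g(x+tz) − g(x))/t for all z ∈ V, and let S_x = G_x⁻¹ ∘ g : C° → C°. If r, s ∈ ∂C ∖ {0} satisfy r + s = x, then for every t ∈ ℝ one has S_x(e^t r + e^{−t} s) = e^{−t} r + e^t s; that is, S_x reverses the type I geodesic γ(t) = e^t r + e^{−t} s through x. -/

import Mathlib

open Set Filter Topology

variable {V : Type*} [NormedAddCommGroup V] [NormedSpace ℝ V]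

/-- `(V, C, u)` is an order unit space whose norm is the order unit norm of `(C, u)`:
`C` is an Archimedean cone and `u` is an order unit of it. -/
structure IsOrderUnitSpace (C : Set V) (u : V) : Prop where
  convex : Convex ℝ C
  smul_mem : ∀ l : ℝ, 0 ≤ l → ∀ x ∈ C, l • x ∈ C
  salient : C ∩ (-C) = {0}
  archimedean : ∀ x : V, ∀ y ∈ C, (∀ n : ℕ, 0 < n → y - (n : ℝ) • x ∈ C) → -x ∈ C
  unit_mem : u ∈ C
  order_unit : ∀ x : V, ∃ l : ℝ, 0 ≤ l ∧ l • u - x ∈ C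
  norm_eq : ∀ x : V, ‖x‖ = sInf {l : ℝ | 0 < l ∧ x + l • u ∈ C ∧ l • u - x ∈ C}

/-- `M(x/y) = inf {β > 0 : x ≤_C β y}`. -/
noncomputable def Mratio (C : Set V) (x y : V) : ℝ :=
  sInf {b : ℝ | 0 < b ∧ b • y - x ∈ C}

/-- The cone `C` is strictly convex: the open segment between any two linearly
independent boundary points lies in the interior. -/
def StrictlyConvexCone (C : Set V) : Prop :=
  ∀ x ∈ frontier C, ∀ y ∈ frontier C, LinearIndependent ℝ ![x, y] →
    openSegment ℝ x y ⊆ interior C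

/-- `g` is antihomogeneous on the interior of `C`: `g (λ x) = λ⁻¹ g x`. -/
def IsAntihomogeneous (C : Set V) (g : V → V) : Prop :=
  ∀ l : ℝ, 0 < l → ∀ x ∈ interior C, g (l • x) = l⁻¹ • g x

/-- `g` is an order-antimorphism of the interior of `C`: `x ≤_C y ↔ g y ≤_C g x`. -/
def IsOrderAntimorphism (C : Set V) (g : V → V) : Prop :=
  ∀ x ∈ interior C, ∀ y ∈ interior C, (y - x ∈ C ↔ g x - g y ∈ C)

/-- A state of `(V, C, u)`: a positive linear functional with `φ u = 1`. -/
def IsState (C : Set V) (u : V) (φ : V →ₗ[ℝ] ℝ) : Prop :=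
  (∀ x ∈ C, 0 ≤ φ x) ∧ φ u = 1

/-!
Since `r + s` is interior, `α • r + β • s ∈ C` iff `0 ≤ α` and `0 ≤ β`, so `g` reverses the
coordinatewise order of the open quadrant spanned by `r` and `s`. The least `l` with
`l • g p - g q ∈ C` then yields boundary points: `g (r + β • s) - g (r + β' • s)` for `β ≤ β'` and
`β • g (r + β • s) - β' • g (r + β' • s)` for `β' ≤ β`. Strict convexity puts the chords through
`g (r + s)` on one ray, and a ray from an interior point meets the boundary only once, so
`g (α • r + β • s) = α⁻¹ • a + β⁻¹ • b`. Differentiating at `r + s` gives `G r = a` and `G s = b`.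
-/

open scoped Pointwise

theorem smul_sub_mem_frontier_of_forall_iff {C : Set V} {p q : V} {l₀ : ℝ} (hl₀ : 0 < l₀)
    (hiff : ∀ l : ℝ, 0 < l → (l • p - q ∈ C ↔ l₀ ≤ l)) : l₀ • p - q ∈ frontier C := by
  refine ⟨subset_closure ((hiff l₀ hl₀).2 le_rfl), fun hint => ?_⟩
  have hnhds : ∀ᶠ l in 𝓝 l₀, l • p - q ∈ interior C :=
    (Continuous.tendsto (by fun_prop) l₀).eventually (isOpen_interior.mem_nhds hint)
  obtain ⟨l, hl, hlt⟩ :=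
    ((hnhds.filter_mono nhdsWithin_le_nhds).and (Ioo_mem_nhdsLT hl₀)).exists
  exact hlt.2.not_ge ((hiff l hlt.1).1 (interior_subset hl))

namespace IsOrderUnitSpace

variable {C : Set V} {u : V}

theorem add_mem (h : IsOrderUnitSpace C u) {a b : V} (ha : a ∈ C) (hb : b ∈ C) :
    a + b ∈ C := by
  have hmid := h.convex ha hb (by norm_num : (0:ℝ) ≤ 1/2) (by norm_num : (0:ℝ) ≤ 1/2)
    (by norm_num)
  convert h.smul_mem 2 zero_le_two _ hmid using 1
  module

theorem eq_zero_of_mem_of_neg_mem (h : IsOrderUnitSpace C u) {v : V} (hv : v ∈ C)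
    (hv' : -v ∈ C) : v = 0 := by
  have : v ∈ C ∩ (-C) := ⟨hv, hv'⟩
  rwa [h.salient, mem_singleton_iff] at this

theorem add_smul_unit_mem_of_norm_lt (h : IsOrderUnitSpace C u) {w : V} {l : ℝ}
    (hl : ‖w‖ < l) : w + l • u ∈ C := by
  obtain ⟨l₁, hl₁, hw₁⟩ := h.order_unit w
  obtain ⟨l₂, hl₂, hw₂⟩ := h.order_unit (-w)
  have hne : {m : ℝ | 0 < m ∧ w + m • u ∈ C ∧ m • u - w ∈ C}.Nonempty := by
    refine ⟨l₁ + l₂ + 1, by positivity, ?_, ?_⟩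
    · convert h.add_mem hw₂ (h.smul_mem (l₁ + 1) (by positivity) u h.unit_mem) using 1
      module
    · convert h.add_mem hw₁ (h.smul_mem (l₂ + 1) (by positivity) u h.unit_mem) using 1
      module
  obtain ⟨m, ⟨-, hm, -⟩, hml⟩ := exists_lt_of_csInf_lt hne (h.norm_eq w ▸ hl)
  convert h.add_mem hm (h.smul_mem (l - m) (by linarith) u h.unit_mem) using 1
  module

theorem mem_of_forall_add_smul_unit_mem (h : IsOrderUnitSpace C u) {w : V}
    (hw : ∀ l : ℝ, 0 < l → w + l • u ∈ C) : w ∈ C := by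
  refine neg_neg w ▸ h.archimedean (-w) u h.unit_mem fun n hn => ?_
  have hn : (0:ℝ) < n := Nat.cast_pos.mpr hn
  convert h.smul_mem n hn.le _ (hw n⁻¹ (inv_pos.mpr hn)) using 1
  rw [smul_add, smul_inv_smul₀ hn.ne']
  module

theorem isClosed (h : IsOrderUnitSpace C u) : IsClosed C := by
  refine isClosed_of_closure_subset fun w hw => h.mem_of_forall_add_smul_unit_mem fun l hl => ?_
  obtain ⟨z, hz, hwz⟩ := Metric.mem_closure_iff.mp hw l hl
  rw [dist_eq_norm] at hwz
  convert h.add_mem hz (h.add_smul_unit_mem_of_norm_lt hwz) using 1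
  abel

theorem frontier_eq (h : IsOrderUnitSpace C u) : frontier C = C \ interior C :=
  h.isClosed.frontier_eq

theorem frontier_subset (h : IsOrderUnitSpace C u) : frontier C ⊆ C :=
  h.frontier_eq ▸ sdiff_subset

theorem add_mem_interior (h : IsOrderUnitSpace C u) {p c : V} (hp : p ∈ interior C)
    (hc : c ∈ C) : p + c ∈ interior C := by
  refine interior_maximal ?_ (isOpen_interior.add_right (t := C)) (add_mem_add hp hc)
  rintro _ ⟨a, ha, b, hb, rfl⟩
  exact h.add_mem (interior_subset ha) hb

theorem smul_set_eq (h : IsOrderUnitSpace C u) {l : ℝ} (hl : 0 < l) : l • C = C := by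
  refine (smul_set_subset_iff.mpr fun x hx => h.smul_mem l hl.le x hx).antisymm fun x hx => ?_
  exact ⟨l⁻¹ • x, h.smul_mem _ (inv_nonneg.mpr hl.le) x hx, smul_inv_smul₀ hl.ne' x⟩

theorem smul_mem_interior (h : IsOrderUnitSpace C u) {l : ℝ} (hl : 0 < l) {p : V}
    (hp : p ∈ interior C) : l • p ∈ interior C := by
  rw [← h.smul_set_eq hl, interior_smul₀ hl.ne']
  exact smul_mem_smul_set hp

theorem smul_mem_frontier (h : IsOrderUnitSpace C u) {l : ℝ} (hl : 0 < l) {p : V}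
    (hp : p ∈ frontier C) : l • p ∈ frontier C := by
  rw [h.frontier_eq] at hp ⊢
  refine ⟨h.smul_mem l hl.le p hp.1, fun hint => hp.2 ?_⟩
  simpa [smul_smul, hl.ne'] using h.smul_mem_interior (inv_pos.mpr hl) hint

theorem smul_add_smul_mem_interior (h : IsOrderUnitSpace C u) {p q : V} (hp : p ∈ C)
    (hq : q ∈ C) (hpq : p + q ∈ interior C) {α β : ℝ} (hα : 0 < α) (hβ : 0 < β) :
    α • p + β • q ∈ interior C := by
  wlog hle : α ≤ β generalizing p q α β
  · rw [add_comm] at hpq ⊢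
    exact this hq hp hpq hβ hα (le_of_not_ge hle)
  convert h.add_mem_interior (h.smul_mem_interior hα hpq) (h.smul_mem (β - α) (by linarith) q hq)
    using 1
  module

theorem add_smul_mem_interior (h : IsOrderUnitSpace C u) {p q : V} (hp : p ∈ C) (hq : q ∈ C)
    (hpq : p + q ∈ interior C) {β : ℝ} (hβ : 0 < β) : p + β • q ∈ interior C := by
  simpa using h.smul_add_smul_mem_interior hp hq hpq one_pos hβ

theorem nonneg_of_smul_add_smul_mem (h : IsOrderUnitSpace C u) {p q : V}
    (hp : p ∈ frontier C) (hq : q ∈ frontier C) (hpq : p + q ∈ interior C) {α β : ℝ}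
    (hmem : α • p + β • q ∈ C) : 0 ≤ α := by
  by_contra! hα
  rcases le_or_gt β 0 with hβ | hβ
  · have hαp : (-α) • p ∈ C := h.smul_mem _ (by linarith) p (h.frontier_subset hp)
    have hβq : (-β) • q ∈ C := h.smul_mem _ (by linarith) q (h.frontier_subset hq)
    have hsum : α • p + β • q = 0 :=
      h.eq_zero_of_mem_of_neg_mem hmem (by convert h.add_mem hαp hβq using 1; module)
    have hp0 : (-α) • p = 0 := h.eq_zero_of_mem_of_neg_mem hαp (by
      convert hβq using 1; linear_combination (norm := module) hsum)
    rw [smul_eq_zero, neg_eq_zero, or_iff_right hα.ne] at hp0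
    rw [hp0, zero_add] at hpq
    exact disjoint_interior_frontier.notMem_of_mem_left hpq hq
  · -- `(-α) • (p + q) + (α • p + β • q) = (β - α) • q` would put `q` in the interior
    have hβα : 0 < β - α := by linarith
    have hint : (β - α) • q ∈ interior C := by
      convert h.add_mem_interior (h.smul_mem_interior (neg_pos.2 hα) hpq) hmem using 1
      module
    have hq' : q ∈ interior C := by
      simpa [smul_smul, hβα.ne'] using h.smul_mem_interior (inv_pos.2 hβα) hint
    exact disjoint_interior_frontier.notMem_of_mem_left hq' hq

theorem smul_add_smul_mem_iff (h : IsOrderUnitSpace C u) {p q : V} (hp : p ∈ frontier C)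
    (hq : q ∈ frontier C) (hpq : p + q ∈ interior C) {α β : ℝ} :
    α • p + β • q ∈ C ↔ 0 ≤ α ∧ 0 ≤ β := by
  refine ⟨fun hmem => ⟨h.nonneg_of_smul_add_smul_mem hp hq hpq hmem, ?_⟩, fun ⟨hα, hβ⟩ => ?_⟩
  · rw [add_comm] at hpq hmem
    exact h.nonneg_of_smul_add_smul_mem hq hp hpq hmem
  · exact h.add_mem (h.smul_mem α hα p (h.frontier_subset hp))
      (h.smul_mem β hβ q (h.frontier_subset hq))

theorem sub_smul_mem_interior (h : IsOrderUnitSpace C u) {w b : V} (hw : w ∈ interior C)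
    (hb : w - b ∈ C) {c : ℝ} (hc₀ : 0 ≤ c) (hc₁ : c < 1) : w - c • b ∈ interior C := by
  convert h.add_mem_interior (h.smul_mem_interior (sub_pos.2 hc₁) hw) (h.smul_mem c hc₀ _ hb)
    using 1
  module

theorem eq_of_sameRay_of_sub_mem_frontier (h : IsOrderUnitSpace C u) {w b b' : V}
    (hw : w ∈ interior C) (hbb' : SameRay ℝ b b') (hb : w - b ∈ frontier C)
    (hb' : w - b' ∈ frontier C) : b = b' := by
  have not_frontier : ∀ {v : V}, w - v ∈ frontier C → ∀ c : ℝ, 0 ≤ c → c < 1 →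
      w - c • v ∉ frontier C := fun hv c hc₀ hc₁ =>
    disjoint_interior_frontier.notMem_of_mem_left
      (h.sub_smul_mem_interior hw (h.frontier_subset hv) hc₀ hc₁)
  have ne_zero : ∀ {v : V}, w - v ∈ frontier C → v ≠ 0 := by
    rintro v hv rfl
    exact not_frontier hv 0 le_rfl one_pos (by simpa using hv)
  obtain ⟨c, hc, rfl⟩ := hbb'.exists_pos_left (ne_zero hb) (ne_zero hb')
  rcases lt_trichotomy c 1 with hlt | rfl | hgt
  · exact absurd hb' (not_frontier hb c hc.le hlt)
  · rw [one_smul]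
  · have := not_frontier hb' c⁻¹ (inv_nonneg.2 hc.le) (inv_lt_one_of_one_lt₀ hgt)
    rw [inv_smul_smul₀ hc.ne'] at this
    exact absurd hb this

theorem sameRay_of_add_mem_frontier (h : IsOrderUnitSpace C u) (hsc : StrictlyConvexCone C)
    {v₁ v₂ : V} (h₁ : v₁ ∈ C) (h₂ : v₂ ∈ C) (hf : v₁ + v₂ ∈ frontier C) : SameRay ℝ v₁ v₂ := by
  by_contra hne
  have hv₁ : v₁ ≠ 0 := fun h0 => hne (h0 ▸ SameRay.zero_left v₂)
  have hv₂ : v₂ ≠ 0 := fun h0 => hne (h0 ▸ SameRay.zero_right v₁)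
  have hfr₁ : v₁ ∈ frontier C := h.frontier_eq ▸ ⟨h₁, fun hi =>
    disjoint_interior_frontier.notMem_of_mem_left (h.add_mem_interior hi h₂) hf⟩
  have hfr₂ : v₂ ∈ frontier C := h.frontier_eq ▸ ⟨h₂, fun hi =>
    disjoint_interior_frontier.notMem_of_mem_left (add_comm v₂ v₁ ▸ h.add_mem_interior hi h₁) hf⟩
  have hli : LinearIndependent ℝ ![v₁, v₂] := by
    by_contra hdep
    obtain hs | hs := sameRay_or_sameRay_neg_iff_not_linearIndependent.2 hdep
    · exact hne hs
    obtain ⟨c, hc, hcv⟩ := hs.exists_pos_left hv₁ (neg_ne_zero.2 hv₂)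
    exact hv₂ (h.eq_zero_of_mem_of_neg_mem h₂ (hcv ▸ h.smul_mem c hc.le v₁ h₁))
  have hmid := hsc v₁ hfr₁ v₂ hfr₂ hli ⟨1/2, 1/2, by norm_num, by norm_num, by norm_num, rfl⟩
  refine disjoint_interior_frontier.notMem_of_mem_left ?_ hf
  convert h.smul_mem_interior two_pos hmid using 1
  module

end IsOrderUnitSpace

theorem eq_neg_of_tendsto_of_sub_eq_smul {φ : ℝ → V} {c v y : V}
    (hφ : Tendsto (fun t : ℝ => t⁻¹ • (φ t - c)) (𝓝[≠] 0) (𝓝 y))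
    (heq : ∀ t : ℝ, 0 < t → φ t - c = ((1 + t)⁻¹ - 1) • v) : y = -v := by
  have hlim : Tendsto (fun t : ℝ => -(1 + t)⁻¹ • v) (𝓝[>] 0) (𝓝 (-v)) := by
    have : ContinuousAt (fun t : ℝ => -(1 + t)⁻¹ • v) 0 := by fun_prop (disch := norm_num)
    simpa using this.tendsto.mono_left nhdsWithin_le_nhds
  have hφ' := hφ.mono_left (nhdsWithin_mono _ fun t (ht : t ∈ Ioi 0) => ne_of_gt ht)
  refine tendsto_nhds_unique (hφ'.congr' ?_) hlim
  filter_upwards [self_mem_nhdsWithin] with t (ht : 0 < t)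
  rw [heq t ht, smul_smul]
  congr 1
  field_simp
  ring

noncomputable def invSlope (g : V → V) (r s : V) (β : ℝ) : V :=
  (β⁻¹ - 1)⁻¹ • (g (r + β • s) - g (r + s))

section Antimorphism

variable {C : Set V} {u : V} {g : V → V} {r s : V}
  (hous : IsOrderUnitSpace C u) (hanti : IsAntihomogeneous C g) (hmor : IsOrderAntimorphism C g)
  (hr : r ∈ frontier C) (hs : s ∈ frontier C) (hrs : r + s ∈ interior C)
include hous hanti hmor hr hs hrs

theorem smul_apply_sub_apply_mem_iff {β β' l : ℝ} (hβ : 0 < β) (hβ' : 0 < β') (hl : 0 < l) :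
    l • g (r + β • s) - g (r + β' • s) ∈ C ↔ 1 ≤ l ∧ β ≤ l * β' := by
  have hint : ∀ {β : ℝ}, 0 < β → r + β • s ∈ interior C :=
    hous.add_smul_mem_interior (hous.frontier_subset hr) (hous.frontier_subset hs) hrs
  have hscale : l • g (r + β • s) = g (l⁻¹ • (r + β • s)) := by
    rw [hanti _ (inv_pos.2 hl) _ (hint hβ), inv_inv]
  rw [hscale, ← hmor _ (hous.smul_mem_interior (inv_pos.2 hl) (hint hβ)) _ (hint hβ'),
    show r + β' • s - l⁻¹ • (r + β • s) = (1 - l⁻¹) • r + (β' - l⁻¹ * β) • s by module,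
    hous.smul_add_smul_mem_iff hr hs hrs, sub_nonneg, sub_nonneg, inv_le_one₀ hl,
    inv_mul_le_iff₀ hl]

theorem apply_sub_apply_mem_frontier {β β' : ℝ} (hβ : 0 < β) (hβ' : 0 < β') (hle : β ≤ β') :
    g (r + β • s) - g (r + β' • s) ∈ frontier C := by
  simpa using smul_sub_mem_frontier_of_forall_iff one_pos fun l hl =>
    (smul_apply_sub_apply_mem_iff hous hanti hmor hr hs hrs hβ hβ' hl).trans
      ⟨And.left, fun h1 => ⟨h1, by nlinarith⟩⟩

theorem smul_apply_sub_smul_apply_mem_frontier {β β' : ℝ} (hβ : 0 < β) (hβ' : 0 < β')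
    (hle : β' ≤ β) : β • g (r + β • s) - β' • g (r + β' • s) ∈ frontier C := by
  have hthr := smul_sub_mem_frontier_of_forall_iff (div_pos hβ hβ') fun l hl =>
    (smul_apply_sub_apply_mem_iff hous hanti hmor hr hs hrs hβ hβ' hl).trans
      ⟨fun h => (div_le_iff₀ hβ').2 h.2, fun h =>
        ⟨((one_le_div hβ').2 hle).trans h, (div_le_iff₀ hβ').1 h⟩⟩
  convert hous.smul_mem_frontier hβ' hthr using 1
  rw [smul_sub, smul_smul, mul_div_cancel₀ _ hβ'.ne']

theorem sub_invSlope_mem_frontier {β : ℝ} (hβ : 0 < β) (hβ1 : β ≠ 1) :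
    g (r + s) - invSlope g r s β ∈ frontier C := by
  have hβ0 : β - 1 ≠ 0 := sub_ne_zero.2 hβ1
  have hform : g (r + s) - invSlope g r s β = (β - 1)⁻¹ • (β • g (r + β • s) - g (r + s)) := by
    rw [invSlope]
    match_scalars <;> field_simp <;> ring
  rcases hβ1.lt_or_gt with hlt | hgt
  · have := smul_apply_sub_smul_apply_mem_frontier hous hanti hmor hr hs hrs one_pos hβ hlt.le
    rw [one_smul, one_smul] at this
    rw [hform, ← neg_sub 1 β, inv_neg, neg_smul, ← smul_neg, neg_sub]
    exact hous.smul_mem_frontier (inv_pos.2 (sub_pos.2 hlt)) this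
  · have := smul_apply_sub_smul_apply_mem_frontier hous hanti hmor hr hs hrs hβ one_pos hgt.le
    rw [one_smul, one_smul] at this
    rw [hform]
    exact hous.smul_mem_frontier (inv_pos.2 (sub_pos.2 hgt)) this

theorem invSlope_eq_of_lt_one_lt (hsc : StrictlyConvexCone C)
    (hmaps : MapsTo g (interior C) (interior C)) {β β' : ℝ} (hβ : 0 < β) (hβ1 : β < 1)
    (hβ' : 1 < β') : invSlope g r s β = invSlope g r s β' := by
  have hβ'0 : 0 < β' := one_pos.trans hβ'
  have h₁ := apply_sub_apply_mem_frontier hous hanti hmor hr hs hrs hβ one_pos hβ1.le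
  have h₂ := apply_sub_apply_mem_frontier hous hanti hmor hr hs hrs one_pos hβ'0 hβ'.le
  have h₁₂ := apply_sub_apply_mem_frontier hous hanti hmor hr hs hrs hβ hβ'0 (hβ1.trans hβ').le
  rw [one_smul] at h₁ h₂
  -- `g (r + s)` splits the boundary segment from `g (r + β • s)` down to `g (r + β' • s)`
  have hray := hous.sameRay_of_add_mem_frontier hsc (hous.frontier_subset h₁)
    (hous.frontier_subset h₂) (by rwa [sub_add_sub_cancel])
  have hslope' : invSlope g r s β' = (1 - β'⁻¹)⁻¹ • (g (r + s) - g (r + β' • s)) := by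
    rw [invSlope, ← neg_sub (g (r + s)), smul_neg, ← neg_smul, ← inv_neg, neg_sub]
  refine hous.eq_of_sameRay_of_sub_mem_frontier (hmaps hrs) ?_
    (sub_invSlope_mem_frontier hous hanti hmor hr hs hrs hβ hβ1.ne)
    (sub_invSlope_mem_frontier hous hanti hmor hr hs hrs hβ'0 hβ'.ne')
  rw [hslope']
  exact (hray.pos_smul_left (inv_pos.2 (sub_pos.2 (one_lt_inv₀ hβ |>.2 hβ1)))).pos_smul_right
    (inv_pos.2 (sub_pos.2 (inv_lt_one_of_one_lt₀ hβ')))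

theorem apply_add_smul_eq (hsc : StrictlyConvexCone C)
    (hmaps : MapsTo g (interior C) (interior C)) {β : ℝ} (hβ : 0 < β) :
    g (r + β • s) = g (r + s) + (β⁻¹ - 1) • invSlope g r s 2 := by
  rcases eq_or_ne β 1 with rfl | hβ1
  · simp
  have hslope : invSlope g r s β = invSlope g r s 2 := by
    have key : ∀ {β β' : ℝ}, 0 < β → β < 1 → 1 < β' → invSlope g r s β = invSlope g r s β' :=
      invSlope_eq_of_lt_one_lt hous hanti hmor hr hs hrs hsc hmaps
    rcases hβ1.lt_or_gt with hlt | hgt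
    · exact key hβ hlt one_lt_two
    · exact (key one_half_pos one_half_lt_one hgt).symm.trans
        (key one_half_pos one_half_lt_one one_lt_two)
  rw [← hslope, invSlope, smul_smul, mul_inv_cancel₀ (sub_ne_zero.2 (inv_ne_one.2 hβ1)),
    one_smul, add_sub_cancel]

theorem exists_apply_smul_add_smul_eq (hsc : StrictlyConvexCone C)
    (hmaps : MapsTo g (interior C) (interior C)) :
    ∃ a b : V, ∀ α β : ℝ, 0 < α → 0 < β → g (α • r + β • s) = α⁻¹ • a + β⁻¹ • b := by
  refine ⟨g (r + s) - invSlope g r s 2, invSlope g r s 2, fun α β hα hβ => ?_⟩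
  have hsplit : α • r + β • s = α • (r + (β / α) • s) := by
    rw [smul_add, smul_smul, mul_div_cancel₀ _ hα.ne']
  rw [hsplit, hanti α hα _ (hous.add_smul_mem_interior (hous.frontier_subset hr)
      (hous.frontier_subset hs) hrs (div_pos hβ hα)),
    apply_add_smul_eq hous hanti hmor hr hs hrs hsc hmaps (div_pos hβ hα)]
  match_scalars
  · ring
  · field_simp
    ring

end Antimorphism

theorem symmetry_reverses_typeI_geodesics_general
    (C : Set V) (u : V) (hous : IsOrderUnitSpace C u) (hsc : StrictlyConvexCone C)
    (g : V → V) (hbij : Set.BijOn g (interior C) (interior C))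
    (hanti : IsAntihomogeneous C g) (hmor : IsOrderAntimorphism C g)
    (x : V) (hx : x ∈ interior C)
    (G : V ≃ₗ[ℝ] V)
    (hG : ∀ z : V, Tendsto (fun t : ℝ => t⁻¹ • (g (x + t • z) - g x))
      (𝓝[≠] (0:ℝ)) (𝓝 (-(G z))))
    (r s : V) (hr : r ∈ frontier C)
    (hs : s ∈ frontier C) (hrs : r + s = x) :
    ∀ t : ℝ, G.symm (g (Real.exp t • r + Real.exp (-t) • s)) =
      Real.exp (-t) • r + Real.exp t • s := by
  subst hrs
  obtain ⟨a, b, hab⟩ := exists_apply_smul_add_smul_eq hous hanti hmor hr hs hx hsc hbij.mapsTo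
  have hgx : g (r + s) = a + b := by simpa using hab 1 1 one_pos one_pos
  have hGx : G (r + s) = a + b := by
    refine neg_injective (eq_neg_of_tendsto_of_sub_eq_smul (hG (r + s)) fun t ht => ?_)
    rw [show r + s + t • (r + s) = (1 + t) • r + (1 + t) • s by module,
      hab _ _ (by positivity) (by positivity), hgx]
    module
  have hGs : G s = b := by
    refine neg_injective (eq_neg_of_tendsto_of_sub_eq_smul (hG s) fun t ht => ?_)
    rw [show r + s + t • s = (1 : ℝ) • r + (1 + t) • s by module,
      hab _ _ one_pos (by positivity), hgx]
    module
  have hGr : G r = a := by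
    rw [map_add, hGs, add_left_inj] at hGx
    exact hGx
  intro t
  rw [LinearEquiv.symm_apply_eq, hab _ _ (Real.exp_pos t) (Real.exp_pos (-t)), map_add, map_smul,
    map_smul, hGr, hGs, ← Real.exp_neg, ← Real.exp_neg, neg_neg]

/-- **Lemma** (geodesic reversal). The symmetry `S_x = G_x⁻¹ ∘ g` reverses every
type I geodesic `t ↦ e^t r + e^{−t} s` (with `r, s ∈ ∂C ∖ {0}`, `r + s = x`)
through `x`. -/
theorem symmetry_reverses_typeI_geodesics
    (C : Set V) (u : V) (hous : IsOrderUnitSpace C u) (hsc : StrictlyConvexCone C)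
    (g : V → V) (hbij : Set.BijOn g (interior C) (interior C))
    (hanti : IsAntihomogeneous C g) (hmor : IsOrderAntimorphism C g)
    (x : V) (hx : x ∈ interior C)
    (G : V ≃ₗ[ℝ] V)
    (hG : ∀ z : V, Tendsto (fun t : ℝ => t⁻¹ • (g (x + t • z) - g x))
      (𝓝[≠] (0:ℝ)) (𝓝 (-(G z))))
    (r s : V) (hr : r ∈ frontier C) (hr0 : r ≠ 0)
    (hs : s ∈ frontier C) (hs0 : s ≠ 0) (hrs : r + s = x) :
    ∀ t : ℝ, G.symm (g (Real.exp t • r + Real.exp (-t) • s)) =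
      Real.exp (-t) • r + Real.exp t • s :=
  symmetry_reverses_typeI_geodesics_general C u hous hsc g hbij hanti hmor x hx G hG r s hr hs hrs
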